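/- For any constant c > e/√2, there is some n0 such that for all n ≥ n0 the following holds: if T1 and T2 are two rooted binary trees on the same label set of size n, chosen uniformly and independently at random, then the expectation E[d_LR(T1, T2)] ≥ n − c√n. -/

import Mathlib

/-!
Common framework: rooted binary trees with leaves bijectively labeled by a
finite label set, leaf removal, restriction, the leaf-removal distance `d_LR`,
compatibility, leaf-disagreements, triplets, LPR moves, etc.
-/

universe u

/-- A rooted binary tree whose leaves carry labels from `α`. -/
inductive LTree (α : Type u) : Type u where
  | leaf : α → LTree α
  | node : LTree α → LTree α → LTree α

namespace LTree

variable {α : Type u} [DecidableEq α]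

/-- The set of leaf labels of a tree. -/
def labels : LTree α → Finset α
  | leaf a => {a}
  | node l r => labels l ∪ labels r

/-- A tree is `Good` when its leaves carry pairwise distinct labels
(i.e. the leaves are bijectively labeled). -/
def Good : LTree α → Prop
  | leaf _ => True
  | node l r => Good l ∧ Good r ∧ Disjoint (labels l) (labels r)

/-- `T` is a (rooted binary, uniquely leaf-labeled) tree on label set `𝒳`. -/
def IsTreeOn (T : LTree α) (𝒳 : Finset α) : Prop :=
  Good T ∧ labels T = 𝒳

/-- Equality of rooted trees: children of a node are unordered. -/
inductive Iso : LTree α → LTree α → Prop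
  | leaf (a : α) : Iso (leaf a) (leaf a)
  | node {l₁ r₁ l₂ r₂ : LTree α} :
      Iso l₁ l₂ → Iso r₁ r₂ → Iso (node l₁ r₁) (node l₂ r₂)
  | swap {l₁ r₁ l₂ r₂ : LTree α} :
      Iso l₁ r₂ → Iso r₁ l₂ → Iso (node l₁ r₁) (node l₂ r₂)

/-- Equality of possibly empty trees (`none` is the empty tree). -/
def OptIso : Option (LTree α) → Option (LTree α) → Prop
  | none, none => True
  | some t₁, some t₂ => Iso t₁ t₂
  | _, _ => False

/-- Restriction `T|_S`: keep exactly the leaves with labels in `S`, suppressing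
the resulting degree-two vertices and degree-one roots; the result is `none`
when no leaf survives. -/
def restrict : LTree α → Finset α → Option (LTree α)
  | leaf a, S => if a ∈ S then some (leaf a) else none
  | node l r, S =>
    match restrict l S, restrict r S with
    | some l', some r' => some (node l' r')
    | some l', none => some l'
    | none, some r' => some r'
    | none, none => none

/-- `T − X`: remove from `T` every leaf whose label lies in `X`. -/
def remove (T : LTree α) (X : Finset α) : Option (LTree α) :=
  restrict T (labels T \ X)

/-- The leaf-removal distance `d_LR(T₁,T₂)`: the minimum number of labels
whose removal makes the two trees equal. -/
noncomputable def dLR (T₁ T₂ : LTree α) : ℕ :=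
  sInf {n | ∃ X : Finset α, X ⊆ labels T₁ ∪ labels T₂ ∧ X.card = n ∧
    OptIso (remove T₁ X) (remove T₂ X)}

def labelsO : Option (LTree α) → Finset α
  | none => ∅
  | some t => labels t

def GoodO : Option (LTree α) → Prop
  | none => True
  | some t => Good t

def restrictO : Option (LTree α) → Finset α → Option (LTree α)
  | none, _ => none
  | some t, S => restrict t S

/-- A family of (possibly empty) trees is compatible if there is a single tree,
on the union of their label sets, which displays all of them. -/
def CompatibleFamO {ι : Type*} (f : ι → Option (LTree α)) : Prop :=
  ∃ TO : Option (LTree α), GoodO TO ∧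
    (↑(labelsO TO) : Set α) = (⋃ i, ↑(labelsO (f i))) ∧
    ∀ i, OptIso (restrictO TO (labelsO (f i))) (f i)

/-- A family of trees is compatible if a single tree displays all of them. -/
def CompatibleFam {ι : Type*} (𝒯 : ι → LTree α) : Prop :=
  CompatibleFamO fun i => some (𝒯 i)

/-- `X` is a leaf-disagreement for the family `𝒯`: removing `X i` from `𝒯 i`
yields a compatible family. -/
def IsLeafDisagreement {ι : Type*} (𝒯 : ι → LTree α) (X : ι → Finset α) : Prop :=
  CompatibleFamO fun i => remove (𝒯 i) (X i)

/-- `X'` is a label-disagreement for the family `𝒯`. -/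
def IsLabelDisagreement {ι : Type*} (𝒯 : ι → LTree α) (X' : Finset α) : Prop :=
  CompatibleFamO fun i => remove (𝒯 i) X'

/-- `MASTRL 𝒯`: the minimum size of a leaf-disagreement for `𝒯`. -/
noncomputable def MASTRL {t : ℕ} (𝒯 : Fin t → LTree α) : ℕ :=
  sInf {v | ∃ X : Fin t → Finset α, (∀ i, X i ⊆ labels (𝒯 i)) ∧
    (∑ i, (X i).card) = v ∧ IsLeafDisagreement 𝒯 X}

/-- The triplet `ab|c` (as a tree). -/
def tripletTree (a b c : α) : LTree α := node (node (leaf a) (leaf b)) (leaf c)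

/-- A rooted triplet: a tree with exactly three (distinctly labeled) leaves. -/
def IsTriplet (R : LTree α) : Prop := Good R ∧ (labels R).card = 3

/-- `ab|c` is a triplet of `T`, i.e. `T|_{a,b,c} = ab|c`. -/
def IsTripletOf (T : LTree α) (a b c : α) : Prop :=
  OptIso (restrict T {a, b, c}) (some (tripletTree a b c))

/-- `tr(T)`: the triplet decomposition of `T`. -/
def trSet (T : LTree α) : Set (LTree α) :=
  {R | ∃ a b c : α, R = tripletTree a b c ∧ IsTripletOf T a b c}

/-- A set of trees is compatible: some tree on the union of the label sets
displays every member. -/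
def CompatibleSet (S : Set (LTree α)) : Prop :=
  ∃ TO : Option (LTree α), GoodO TO ∧
    (↑(labelsO TO) : Set α) = (⋃ R ∈ S, ↑(labels R)) ∧
    ∀ R ∈ S, OptIso (restrictO TO (labels R)) (some R)

/-- `MINRTI ℛ`: the minimum number of triplets to delete from `ℛ` so that the
remaining triplets are compatible. -/
noncomputable def MINRTI {t : ℕ} (R : Fin t → LTree α) : ℕ :=
  sInf {m | ∃ s : Finset (Fin t), s.card = m ∧
    CompatibleFam (fun i : {i : Fin t // i ∉ s} => R i.1)}

/-- Graft the leaf `x` at the position (edge) addressed by `p` in `T`.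
The empty address grafts `x` above the root of `T` (the `⊥` case); the address
of an internal/leaf vertex `v` grafts `x` on the edge between `v` and its
parent.  `none` when the address is invalid. -/
def graftAt (x : α) : LTree α → List Bool → Option (LTree α)
  | T, [] => some (node (leaf x) T)
  | leaf _, _ :: _ => none
  | node l r, b :: p =>
    if b then (graftAt x l p).map (fun l' => node l' r)
    else (graftAt x r p).map (fun r' => node l r')

/-- `T'` is obtained from `T` by a single LPR (leaf prune-and-regraft) move on
the leaf `x`: prune `x` from `T` and regraft it, either on an edge of
`T − {x}` or above its root. -/
def LPRStep (x : α) (T T' : LTree α) : Prop :=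
  (remove T {x} = none ∧ T' = leaf x) ∨
  ∃ T₀ p, remove T {x} = some T₀ ∧ graftAt x T₀ p = some T'

/-- `TurnsInto L T T'`: the LPR sequence with (ordered) leaf list `L` turns
`T` into `T'`. -/
inductive TurnsInto : List α → LTree α → LTree α → Prop
  | nil {T T' : LTree α} : Iso T T' → TurnsInto [] T T'
  | cons {x : α} {xs : List α} {T T'' T' : LTree α} :
      LPRStep x T T'' → TurnsInto xs T'' T' → TurnsInto (x :: xs) T T'

/-- `confset(T₁,T₂)`: the collection of 3-label sets `{a,b,c}` such that
`T₁` contains a triplet on `{a,b,c}` conflicting with a triplet of `T₂`. -/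
def confset (T₁ T₂ : LTree α) : Set (Finset α) :=
  {s | ∃ a b c : α, s = {a, b, c} ∧ IsTripletOf T₁ a b c ∧
    (IsTripletOf T₂ a c b ∨ IsTripletOf T₂ b c a)}

/-- `X` is a minimal disagreement between `T₁` and `T₂`. -/
def MinimalDisagreement (T₁ T₂ : LTree α) (X : Finset α) : Prop :=
  X ⊆ labels T₁ ∪ labels T₂ ∧
  OptIso (remove T₁ X) (remove T₂ X) ∧
  ∀ X' ⊂ X, ¬ OptIso (remove T₁ X') (remove T₂ X')

/-- `u` is (the rooted subtree hanging at) a node of `T`. -/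
inductive IsSubtree : LTree α → LTree α → Prop
  | refl (T : LTree α) : IsSubtree T T
  | left {u l r : LTree α} : IsSubtree u l → IsSubtree u (node l r)
  | right {u l r : LTree α} : IsSubtree u r → IsSubtree u (node l r)

/-- `u` is the least common ancestor in `T` of the labels in `Z`. -/
def IsLCA (T : LTree α) (Z : Finset α) (u : LTree α) : Prop :=
  IsSubtree u T ∧ Z ⊆ labels u ∧
    ∀ w, IsSubtree w T → Z ⊆ labels w → IsSubtree u w

end LTree

/-!
If `d_LR(T₁, T₂) ≤ n - k`, then `T₁` and `T₂` agree on some `k`-subset `S` of the labels. For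
fixed `T₁` and `S`, a uniform `T₂` has `T₂|_S = T₁|_S` with probability `1/(2k-3)!!`: a tree on
`m` labels has `4m - 2` one-leaf extensions, so all trees on `S` are restrictions of equally many
trees on the full label set, and `T₁|_S` has `2^(k-1)` orderings of children (trees here are
ordered, `2^(n-1)` of them representing each tree of the paper). A union bound over the `C(n, k)`
subsets gives `E[d_LR] ≥ n - (k - 1) - n C(n, k)/(2k-3)!!`. For `k - 1 = ⌈c'√n⌉` with
`e/√2 < c' < c`, Stirling's bound `m! ≥ (m/e)^m` makes the last term at most `n² ρ^(k-1)` with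
`ρ = e²/(2c'²) < 1`, which tends to zero.
-/

open Filter Real in
theorem eventually_sq_mul_pow_le_one {ρ b : ℝ} (hρ₀ : 0 < ρ) (hρ₁ : ρ < 1) (hb : 0 < b) :
    ∀ᶠ n : ℕ in atTop, ∀ j : ℕ, b * √n ≤ j → (n : ℝ) ^ 2 * ρ ^ j ≤ 1 := by
  have hlog := log_neg hρ₀ hρ₁
  have hlim := (tendsto_rpow_mul_exp_neg_mul_atTop_nhds_zero 4 _
    (mul_pos (neg_pos.2 hlog) hb)).comp
    (tendsto_sqrt_atTop.comp tendsto_natCast_atTop_atTop)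
  filter_upwards [hlim.eventually_le_const zero_lt_one] with n hn j hj
  have hpow : ρ ^ j ≤ exp (-(-log ρ * b) * √n) :=
    calc ρ ^ j = exp (j * log ρ) := by rw [exp_nat_mul, exp_log hρ₀]
      _ ≤ _ := exp_le_exp.2 (by nlinarith)
  have hsq : (√n) ^ (4 : ℝ) = (n : ℝ) ^ 2 := by
    rw [rpow_ofNat, show 4 = 2 * 2 by rfl, pow_mul, sq_sqrt n.cast_nonneg]
  calc (n : ℝ) ^ 2 * ρ ^ j ≤ (√n) ^ (4 : ℝ) * exp (-(-log ρ * b) * √n) := by rw [hsq]; gcongr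
    _ ≤ 1 := hn

deriving instance DecidableEq for LTree

namespace LTree

section

variable {α : Type u}

def nodeO : Option (LTree α) → Option (LTree α) → Option (LTree α)
  | some l, some r => some (node l r)
  | some l, none => some l
  | none, some r => some r
  | none, none => none

theorem OptIso.nodeO {o₁ o₂ o₁' o₂' : Option (LTree α)} (h₁ : OptIso o₁ o₁')
    (h₂ : OptIso o₂ o₂') : OptIso (LTree.nodeO o₁ o₂) (LTree.nodeO o₁' o₂') := by
  cases o₁ <;> cases o₁' <;> cases o₂ <;> cases o₂' <;> simp_all [OptIso, LTree.nodeO]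
  exact Iso.node h₁ h₂

theorem OptIso.nodeO_swap {o₁ o₂ o₁' o₂' : Option (LTree α)} (h₁ : OptIso o₁ o₂')
    (h₂ : OptIso o₂ o₁') : OptIso (LTree.nodeO o₁ o₂) (LTree.nodeO o₁' o₂') := by
  cases o₁ <;> cases o₁' <;> cases o₂ <;> cases o₂' <;> simp_all [OptIso, LTree.nodeO]
  exact Iso.swap h₁ h₂

def numLeaves : LTree α → ℕ
  | leaf _ => 1
  | node l r => numLeaves l + numLeaves r

/-- The trees obtained from `T` by attaching a new leaf `x`, on either side, above any vertex. -/
def ins (x : α) (T : LTree α) : List (LTree α) :=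
  node (leaf x) T :: node T (leaf x) ::
    match T with
    | leaf _ => []
    | node l r => (ins x l).map (node · r) ++ (ins x r).map (node l ·)

theorem length_ins (x : α) (T : LTree α) : (ins x T).length + 2 = 4 * numLeaves T := by
  induction T with
  | leaf a => simp [ins, numLeaves]
  | node l r ihl ihr =>
    rw [ins, numLeaves]
    simp only [List.length_cons, List.length_append, List.length_map]
    omega

theorem node_leaf_mem_ins (x : α) (T : LTree α) : node (leaf x) T ∈ ins x T := by
  unfold ins; exact List.mem_cons_self

theorem node_mem_ins_leaf (x : α) (T : LTree α) : node T (leaf x) ∈ ins x T := by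
  unfold ins; exact .tail _ List.mem_cons_self

theorem node_mem_ins_left {x : α} {l l' : LTree α} (r : LTree α) (h : l' ∈ ins x l) :
    node l' r ∈ ins x (node l r) := by
  rw [ins]; exact .tail _ <| .tail _ <| List.mem_append_left _ <| List.mem_map_of_mem h

theorem node_mem_ins_right {x : α} {r r' : LTree α} (l : LTree α) (h : r' ∈ ins x r) :
    node l r' ∈ ins x (node l r) := by
  rw [ins]; exact .tail _ <| .tail _ <| List.mem_append_right _ <| List.mem_map_of_mem h

theorem exists_eq_node_of_mem_ins {x : α} {T T' : LTree α} (h : T' ∈ ins x T) :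
    ∃ u v, T' = node u v := by
  cases T <;> simp only [ins, List.mem_cons, List.mem_append, List.mem_map] at h <;> aesop

/-- Every tree obtained from `T` by reordering children, possibly with repetitions. -/
def isoList : LTree α → List (LTree α)
  | leaf a => [leaf a]
  | node l r =>
    (isoList l ×ˢ isoList r).map (fun p => node p.1 p.2) ++
      (isoList l ×ˢ isoList r).map (fun p => node p.2 p.1)

theorem mem_isoList_of_iso {T X : LTree α} (h : Iso T X) : X ∈ isoList T := by
  induction h with
  | leaf a => simp [isoList]
  | node _ _ ih₁ ih₂ => simp [isoList, ih₁, ih₂]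
  | swap _ _ ih₁ ih₂ => simp [isoList, ih₁, ih₂]

theorem iso_of_mem_isoList {T X : LTree α} (h : X ∈ isoList T) : Iso T X := by
  induction T generalizing X with
  | leaf a => rw [List.mem_singleton.1 h]; exact Iso.leaf a
  | node l r ihl ihr =>
    rw [isoList] at h
    simp only [List.mem_append, List.mem_map, Prod.exists, List.mem_product] at h
    rcases h with ⟨l', r', ⟨hl', hr'⟩, rfl⟩ | ⟨l', r', ⟨hl', hr'⟩, rfl⟩
    · exact Iso.node (ihl hl') (ihr hr')
    · exact Iso.swap (ihl hl') (ihr hr')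

theorem two_mul_length_isoList (T : LTree α) : 2 * (isoList T).length = 2 ^ numLeaves T := by
  induction T with
  | leaf a => rfl
  | node l r ihl ihr =>
    rw [isoList, List.length_append, List.length_map, List.length_map, List.length_product,
      numLeaves, pow_add, ← ihl, ← ihr]
    ring

end

variable {α : Type u} [DecidableEq α]

theorem restrict_node (l r : LTree α) (S : Finset α) :
    restrict (node l r) S = nodeO (restrict l S) (restrict r S) := rfl

theorem labelsO_nodeO (o₁ o₂ : Option (LTree α)) :
    labelsO (nodeO o₁ o₂) = labelsO o₁ ∪ labelsO o₂ := by
  cases o₁ <;> cases o₂ <;> simp [nodeO, labelsO, labels]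

theorem restrictO_nodeO (o₁ o₂ : Option (LTree α)) (S : Finset α) :
    restrictO (nodeO o₁ o₂) S = nodeO (restrictO o₁ S) (restrictO o₂ S) := by
  cases o₁ <;> cases o₂ <;> simp only [nodeO, restrictO, restrict_node] <;>
    rename_i t <;> cases restrict t S <;> rfl

theorem labels_nonempty : ∀ T : LTree α, (labels T).Nonempty
  | leaf a => Finset.singleton_nonempty a
  | node l _ => (labels_nonempty l).mono Finset.subset_union_left

theorem labelsO_eq_empty_iff {o : Option (LTree α)} : labelsO o = ∅ ↔ o = none := by
  cases o with
  | none => simp [labelsO]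
  | some t => simpa [labelsO] using (labels_nonempty t).ne_empty

theorem labelsO_restrict (T : LTree α) (S : Finset α) :
    labelsO (restrict T S) = labels T ∩ S := by
  induction T with
  | leaf a => by_cases h : a ∈ S <;> simp [restrict, labelsO, labels, h]
  | node l r ihl ihr =>
    rw [restrict_node, labelsO_nodeO, ihl, ihr, labels, Finset.union_inter_distrib_right]

theorem restrict_eq_none_iff {T : LTree α} {S : Finset α} :
    restrict T S = none ↔ labels T ∩ S = ∅ := by
  rw [← labelsO_eq_empty_iff, labelsO_restrict]

theorem GoodO.nodeO {o₁ o₂ : Option (LTree α)} (h₁ : GoodO o₁) (h₂ : GoodO o₂)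
    (hd : Disjoint (labelsO o₁) (labelsO o₂)) : GoodO (LTree.nodeO o₁ o₂) := by
  cases o₁ <;> cases o₂ <;> first | exact ⟨h₁, h₂, hd⟩ | trivial

theorem good_restrict {T : LTree α} (hT : Good T) (S : Finset α) : GoodO (restrict T S) := by
  induction T with
  | leaf a => by_cases h : a ∈ S <;> simp [restrict, GoodO, Good, h]
  | node l r ihl ihr =>
    obtain ⟨hl, hr, hd⟩ := hT
    have hd' : Disjoint (labelsO (restrict l S)) (labelsO (restrict r S)) := by
      rw [labelsO_restrict, labelsO_restrict]
      exact hd.mono Finset.inter_subset_left Finset.inter_subset_left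
    rw [restrict_node]
    exact (ihl hl).nodeO (ihr hr) hd'

theorem restrict_of_subset {T : LTree α} {S : Finset α} (h : labels T ⊆ S) :
    restrict T S = some T := by
  induction T with
  | leaf a => simpa [restrict, labels] using h
  | node l r ihl ihr =>
    rw [labels, Finset.union_subset_iff] at h
    rw [restrict_node, ihl h.1, ihr h.2]
    rfl

theorem restrictO_restrict (T : LTree α) (S S' : Finset α) :
    restrictO (restrict T S) S' = restrict T (S ∩ S') := by
  induction T with
  | leaf a => by_cases h : a ∈ S <;> by_cases h' : a ∈ S' <;> simp [restrict, restrictO, h, h']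
  | node l r ihl ihr => rw [restrict_node, restrict_node, restrictO_nodeO, ihl, ihr]

theorem eq_leaf_of_labels_eq_singleton {T : LTree α} {a : α} (hT : Good T)
    (h : labels T = {a}) : T = leaf a := by
  cases T with
  | leaf b => simpa [labels] using h
  | node l r =>
    obtain ⟨-, -, hd⟩ := hT
    obtain ⟨b, hb⟩ := labels_nonempty l
    obtain ⟨c, hc⟩ := labels_nonempty r
    have hba : b ∈ labels (node l r) := Finset.mem_union_left _ hb
    have hca : c ∈ labels (node l r) := Finset.mem_union_right _ hc
    rw [h, Finset.mem_singleton] at hba hca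
    exact absurd (hba ▸ hca ▸ hc) (Finset.disjoint_left.1 hd hb)

theorem IsTreeOn.exists_restrict {T : LTree α} {𝒳 S : Finset α} (hT : IsTreeOn T 𝒳)
    (hS : S ⊆ 𝒳) (hSne : S.Nonempty) : ∃ R, restrict T S = some R ∧ IsTreeOn R S := by
  have hlab := labelsO_restrict T S
  rw [hT.2, Finset.inter_eq_right.2 hS] at hlab
  cases h : restrict T S with
  | none => rw [h, labelsO] at hlab; exact absurd hlab.symm hSne.ne_empty
  | some R =>
    rw [h] at hlab
    have hg := good_restrict hT.1 S
    rw [h] at hg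
    exact ⟨R, rfl, hg, hlab⟩

theorem Iso.labels_eq {T₁ T₂ : LTree α} (h : Iso T₁ T₂) : labels T₁ = labels T₂ := by
  induction h with
  | leaf a => rfl
  | node _ _ ih₁ ih₂ => simp only [labels, ih₁, ih₂]
  | swap _ _ ih₁ ih₂ => simp only [labels, ih₁, ih₂, Finset.union_comm]

theorem Iso.good {T₁ T₂ : LTree α} (h : Iso T₁ T₂) (hg : Good T₁) : Good T₂ := by
  induction h with
  | leaf a => trivial
  | node h₁ h₂ ih₁ ih₂ =>
    obtain ⟨g₁, g₂, hd⟩ := hg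
    exact ⟨ih₁ g₁, ih₂ g₂, h₁.labels_eq ▸ h₂.labels_eq ▸ hd⟩
  | swap h₁ h₂ ih₁ ih₂ =>
    obtain ⟨g₁, g₂, hd⟩ := hg
    exact ⟨ih₂ g₂, ih₁ g₁, h₁.labels_eq ▸ h₂.labels_eq ▸ hd.symm⟩

theorem Iso.optIso_restrict {T₁ T₂ : LTree α} (h : Iso T₁ T₂) (S : Finset α) :
    OptIso (restrict T₁ S) (restrict T₂ S) := by
  induction h with
  | leaf a => by_cases h : a ∈ S <;> simp [restrict, OptIso, h, Iso.leaf]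
  | node _ _ ih₁ ih₂ => rw [restrict_node, restrict_node]; exact ih₁.nodeO ih₂
  | swap _ _ ih₁ ih₂ => rw [restrict_node, restrict_node]; exact ih₁.nodeO_swap ih₂

theorem OptIso.restrictO {o₁ o₂ : Option (LTree α)} (h : OptIso o₁ o₂) (S : Finset α) :
    OptIso (restrictO o₁ S) (restrictO o₂ S) := by
  cases o₁ <;> cases o₂ <;> first | exact h.elim | trivial | exact Iso.optIso_restrict h S

theorem card_labels {T : LTree α} (hT : Good T) : (labels T).card = numLeaves T := by
  induction T with
  | leaf a => rfl
  | node l r ihl ihr =>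
    obtain ⟨hl, hr, hd⟩ := hT
    rw [labels, Finset.card_union_of_disjoint hd, ihl hl, ihr hr, numLeaves]

theorem labels_of_mem_ins {x : α} {T T' : LTree α} (h : T' ∈ ins x T) :
    labels T' = insert x (labels T) := by
  induction T generalizing T' with
  | leaf a =>
    simp only [ins, List.mem_cons, List.not_mem_nil, or_false] at h
    rcases h with rfl | rfl <;> ext <;> simp [labels, or_comm]
  | node l r ihl ihr =>
    simp only [ins, List.mem_cons, List.mem_append, List.mem_map] at h
    rcases h with rfl | rfl | ⟨l', hl', rfl⟩ | ⟨r', hr', rfl⟩ <;> ext <;>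
      simp [labels, *]

theorem good_of_mem_ins {x : α} {T T' : LTree α} (hT : Good T) (hx : x ∉ labels T)
    (h : T' ∈ ins x T) : Good T' := by
  induction T generalizing T' with
  | leaf a =>
    simp only [ins, List.mem_cons, List.not_mem_nil, or_false] at h
    rcases h with rfl | rfl <;> simpa [Good, labels, eq_comm] using hx
  | node l r ihl ihr =>
    obtain ⟨hl, hr, hd⟩ := hT
    simp only [labels, Finset.mem_union, not_or] at hx
    simp only [ins, List.mem_cons, List.mem_append, List.mem_map] at h
    rcases h with rfl | rfl | ⟨l', hl', rfl⟩ | ⟨r', hr', rfl⟩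
    · exact ⟨trivial, ⟨hl, hr, hd⟩, by simp [labels, hx.1, hx.2]⟩
    · exact ⟨⟨hl, hr, hd⟩, trivial, by simp [labels, hx.1, hx.2]⟩
    · exact ⟨ihl hl hx.1 hl', hr, by simp [labels_of_mem_ins hl', hx.2, hd]⟩
    · exact ⟨hl, ihr hr hx.2 hr', by simp [labels_of_mem_ins hr', hx.1, hd]⟩

theorem restrict_of_mem_ins {x : α} {T T' : LTree α} {S : Finset α} (hx : x ∉ S)
    (h : T' ∈ ins x T) : restrict T' S = restrict T S := by
  have hxS : restrict (leaf x) S = none := by simp [restrict, hx]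
  induction T generalizing T' with
  | leaf a =>
    simp only [ins, List.mem_cons, List.not_mem_nil, or_false] at h
    rcases h with rfl | rfl <;> rw [restrict_node, hxS] <;> cases restrict (leaf a) S <;> rfl
  | node l r ihl ihr =>
    simp only [ins, List.mem_cons, List.mem_append, List.mem_map] at h
    rcases h with rfl | rfl | ⟨l', hl', rfl⟩ | ⟨r', hr', rfl⟩
    · rw [restrict_node, hxS]; cases restrict (node l r) S <;> rfl
    · rw [restrict_node, hxS]; cases restrict (node l r) S <;> rfl
    · rw [restrict_node, restrict_node, ihl hl']
    · rw [restrict_node, restrict_node, ihr hr']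

theorem nodup_ins {x : α} {T : LTree α} (hx : x ∉ labels T) : (ins x T).Nodup := by
  induction T with
  | leaf a => simpa [ins, labels, eq_comm] using hx
  | node l r ihl ihr =>
    simp only [labels, Finset.mem_union, not_or] at hx
    have hmem {t t' : LTree α} (h : t' ∈ ins x t) : x ∈ labels t' ∧ ∃ u v, t' = node u v :=
      ⟨by simp [labels_of_mem_ins h], exists_eq_node_of_mem_ins h⟩
    have hxl : leaf x ≠ l := fun h => hx.1 (h ▸ Finset.mem_singleton_self x)
    have hxr : leaf x ≠ r := fun h => hx.2 (h ▸ Finset.mem_singleton_self x)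
    rw [ins]
    simp only [List.nodup_cons, List.nodup_append, List.mem_cons, List.mem_append, List.mem_map]
    refine ⟨?_, ?_, (ihl hx.1).map (fun _ _ h => (node.inj h).1),
      (ihr hx.2).map (fun _ _ h => (node.inj h).2), ?_⟩
    · rintro (h | ⟨l', hl', h⟩ | ⟨r', hr', h⟩)
      · cases h
      · obtain ⟨u, v, rfl⟩ := (hmem hl').2; cases h
      · cases h; exact hxl rfl
    · rintro (⟨l', hl', h⟩ | ⟨r', hr', h⟩)
      · cases h; exact hxr rfl
      · obtain ⟨u, v, rfl⟩ := (hmem hr').2; cases h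
    · rintro _ ⟨l', hl', rfl⟩ _ ⟨r', hr', rfl⟩ h
      exact hx.1 ((node.inj h).1 ▸ (hmem hl').1)

theorem eq_leaf_of_restrict_eq_none {x : α} {T : LTree α} {S : Finset α} (hT : Good T)
    (hx : x ∈ labels T) (hTS : labels T ⊆ insert x S) (h : restrict T S = none) :
    T = leaf x := by
  rw [restrict_eq_none_iff] at h
  refine eq_leaf_of_labels_eq_singleton hT (Finset.eq_singleton_iff_unique_mem.2 ⟨hx, ?_⟩)
  intro y hy
  refine (Finset.mem_insert.1 (hTS hy)).resolve_right fun hyS => ?_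
  simpa [h] using Finset.mem_inter.2 ⟨hy, hyS⟩

theorem mem_ins_of_restrict_eq {x : α} {T T₀ : LTree α} {S : Finset α} (hT : Good T)
    (hx : x ∈ labels T) (hxS : x ∉ S) (hTS : labels T ⊆ insert x S)
    (h : restrict T S = some T₀) : T ∈ ins x T₀ := by
  induction T generalizing T₀ with
  | leaf a =>
    rw [labels, Finset.mem_singleton] at hx
    subst hx
    simp [restrict, hxS] at h
  | node l r ihl ihr =>
    obtain ⟨hl, hr, hd⟩ := hT
    rw [labels, Finset.union_subset_iff] at hTS
    have hsub {t : LTree α} (ht : labels t ⊆ insert x S) (hxt : x ∉ labels t) :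
        restrict t S = some t :=
      restrict_of_subset fun y hy =>
        (Finset.mem_insert.1 (ht hy)).resolve_left fun hyx => hxt (hyx ▸ hy)
    rw [restrict_node] at h
    rcases Finset.mem_union.1 hx with hxl | hxr
    · rw [hsub hTS.2 (Finset.disjoint_left.1 hd hxl)] at h
      cases hl₀ : restrict l S with
      | none =>
        obtain rfl : r = T₀ := by simpa [hl₀, nodeO] using h
        rw [eq_leaf_of_restrict_eq_none hl hxl hTS.1 hl₀]
        exact node_leaf_mem_ins x r
      | some l₀ =>
        obtain rfl : node l₀ r = T₀ := by simpa [hl₀, nodeO] using h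
        exact node_mem_ins_left r (ihl hl hxl hTS.1 hl₀)
    · rw [hsub hTS.1 (Finset.disjoint_right.1 hd hxr)] at h
      cases hr₀ : restrict r S with
      | none =>
        obtain rfl : l = T₀ := by simpa [hr₀, nodeO] using h
        rw [eq_leaf_of_restrict_eq_none hr hxr hTS.2 hr₀]
        exact node_mem_ins_leaf x l
      | some r₀ =>
        obtain rfl : node l r₀ = T₀ := by simpa [hr₀, nodeO] using h
        exact node_mem_ins_right l (ihr hr hxr hTS.2 hr₀)

theorem isTreeOn_insert_iff {x : α} {𝒳 : Finset α} {T : LTree α} (hx : x ∉ 𝒳)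
    (h𝒳 : 𝒳.Nonempty) : IsTreeOn T (insert x 𝒳) ↔ ∃ T₀, IsTreeOn T₀ 𝒳 ∧ T ∈ ins x T₀ := by
  constructor
  · intro hT
    obtain ⟨T₀, hres, hT₀⟩ := hT.exists_restrict (Finset.subset_insert x 𝒳) h𝒳
    exact ⟨T₀, hT₀, mem_ins_of_restrict_eq hT.1 (by simp [hT.2]) hx hT.2.subset hres⟩
  · rintro ⟨T₀, hT₀, hT⟩
    exact ⟨good_of_mem_ins hT₀.1 (hT₀.2 ▸ hx) hT, by rw [labels_of_mem_ins hT, hT₀.2]⟩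

theorem restrict_eq_of_mem_ins {x : α} {𝒳 : Finset α} {T T₀ : LTree α} (hx : x ∉ 𝒳)
    (hT₀ : IsTreeOn T₀ 𝒳) (hT : T ∈ ins x T₀) : restrict T 𝒳 = some T₀ := by
  rw [restrict_of_mem_ins hx hT, restrict_of_subset hT₀.2.subset]

theorem exists_finset_isTreeOn (𝒳 : Finset α) :
    ∃ F : Finset (LTree α), ∀ T, T ∈ F ↔ IsTreeOn T 𝒳 := by
  induction 𝒳 using Finset.induction_on with
  | empty => exact ⟨∅, fun T => by simpa [IsTreeOn] using fun _ => (labels_nonempty T).ne_empty⟩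
  | @insert x 𝒳 hx ih =>
    obtain rfl | h𝒳 := 𝒳.eq_empty_or_nonempty
    · refine ⟨{leaf x}, fun T => ⟨fun h => ?_, fun ⟨hg, hl⟩ => ?_⟩⟩
      · rw [Finset.mem_singleton.1 h]; exact ⟨trivial, rfl⟩
      · exact Finset.mem_singleton.2 (eq_leaf_of_labels_eq_singleton hg hl)
    · obtain ⟨F, hF⟩ := ih
      refine ⟨F.biUnion fun T₀ => (ins x T₀).toFinset, fun T => ?_⟩
      simp [isTreeOn_insert_iff hx h𝒳, hF]

/-- The number of trees on `n` labels that restrict to a given tree on `k` of them: a tree on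
`m` labels has `4 * m - 2` one-leaf extensions. -/
def extensionCount (k n : ℕ) : ℕ := ∏ m ∈ Finset.Ico k n, (4 * m - 2)

theorem extensionCount_mul {k m n : ℕ} (hkm : k ≤ m) (hmn : m ≤ n) :
    extensionCount k m * extensionCount m n = extensionCount k n :=
  Finset.prod_Ico_consecutive _ hkm hmn

theorem extensionCount_pos {k : ℕ} (hk : 1 ≤ k) (n : ℕ) : 0 < extensionCount k n :=
  Finset.prod_pos fun m hm => by have := (Finset.mem_Ico.1 hm).1; omega

theorem extensionCount_one_mul_factorial (j : ℕ) :
    extensionCount 1 (j + 1) * j.factorial = (2 * j).factorial := by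
  induction j with
  | zero => rfl
  | succ j ih =>
    rw [extensionCount, Finset.prod_Ico_succ_top (by omega), ← extensionCount,
      Nat.factorial_succ, show 2 * (j + 1) = 2 * j + 1 + 1 by ring, Nat.factorial_succ,
      Nat.factorial_succ, ← ih]
    have : 4 * (j + 1) - 2 = 2 * (2 * j + 1) := by omega
    rw [this]
    ring

theorem card_filter_of_isTreeOn_insert {x : α} {𝒳 : Finset α} {F F₀ : Finset (LTree α)}
    (hx : x ∉ 𝒳) (h𝒳 : 𝒳.Nonempty) (hF : ∀ T, T ∈ F ↔ IsTreeOn T (insert x 𝒳))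
    (hF₀ : ∀ T, T ∈ F₀ ↔ IsTreeOn T 𝒳) (P : LTree α → Prop) [DecidablePred P]
    (hP : ∀ T₀ T, T ∈ ins x T₀ → (P T ↔ P T₀)) :
    (F.filter P).card = (F₀.filter P).card * (4 * 𝒳.card - 2) := by
  have hsplit : F.filter P = (F₀.filter P).biUnion fun T₀ => (ins x T₀).toFinset := by
    ext T
    simp only [Finset.mem_filter, Finset.mem_biUnion, List.mem_toFinset, hF, hF₀,
      isTreeOn_insert_iff hx h𝒳]
    constructor
    · rintro ⟨⟨T₀, hT₀, hT⟩, hPT⟩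
      exact ⟨T₀, ⟨hT₀, (hP T₀ T hT).1 hPT⟩, hT⟩
    · rintro ⟨T₀, ⟨hT₀, hPT₀⟩, hT⟩
      exact ⟨⟨T₀, hT₀, hT⟩, (hP T₀ T hT).2 hPT₀⟩
  rw [hsplit, Finset.card_biUnion, Finset.sum_const_nat]
  · intro T₀ hT₀
    obtain ⟨hg, hl⟩ := (hF₀ T₀).1 (Finset.mem_filter.1 hT₀).1
    have := length_ins x T₀
    rw [List.toFinset_card_of_nodup (nodup_ins (hl ▸ hx)), ← hl, card_labels hg]
    omega
  · intro T₀ hT₀ T₁ hT₁ hne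
    refine Finset.disjoint_left.2 fun T h₀ h₁ => hne ?_
    have hT₀ := (hF₀ T₀).1 (Finset.mem_filter.1 hT₀).1
    have hT₁ := (hF₀ T₁).1 (Finset.mem_filter.1 hT₁).1
    rw [List.mem_toFinset] at h₀ h₁
    exact Option.some_inj.1 <|
      (restrict_eq_of_mem_ins hx hT₀ h₀).symm.trans (restrict_eq_of_mem_ins hx hT₁ h₁)

theorem card_filter_restrict_eq {𝒳 S : Finset α} {F : Finset (LTree α)} {R : LTree α}
    (hF : ∀ T, T ∈ F ↔ IsTreeOn T 𝒳) (hS : S ⊆ 𝒳) (hSne : S.Nonempty) (hR : IsTreeOn R S) :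
    (F.filter (restrict · S = some R)).card = extensionCount S.card 𝒳.card := by
  obtain ⟨D, hD, rfl⟩ : ∃ D, Disjoint D S ∧ 𝒳 = D ∪ S :=
    ⟨𝒳 \ S, Finset.sdiff_disjoint, (Finset.sdiff_union_of_subset hS).symm⟩
  clear hS
  induction D using Finset.induction_on generalizing F with
  | empty =>
    rw [Finset.empty_union] at hF ⊢
    rw [extensionCount, Finset.Ico_self, Finset.prod_empty, Finset.card_eq_one]
    refine ⟨R, Finset.eq_singleton_iff_unique_mem.2 ⟨?_, fun T hT => ?_⟩⟩
    · exact Finset.mem_filter.2 ⟨(hF R).2 hR, restrict_of_subset hR.2.subset⟩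
    · obtain ⟨hTF, hTR⟩ := Finset.mem_filter.1 hT
      rw [restrict_of_subset ((hF T).1 hTF).2.subset] at hTR
      exact Option.some_inj.1 hTR
  | @insert x D hxD ih =>
    rw [Finset.insert_union] at hF ⊢
    have hx : x ∉ D ∪ S := by
      simpa [hxD] using Finset.disjoint_left.1 hD (Finset.mem_insert_self x D)
    obtain ⟨F₀, hF₀⟩ := exists_finset_isTreeOn (D ∪ S)
    have hxS : x ∉ S := fun h => hx (Finset.mem_union_right D h)
    rw [card_filter_of_isTreeOn_insert hx (hSne.mono Finset.subset_union_right) hF hF₀ _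
        (fun T₀ T hT => by rw [restrict_of_mem_ins hxS hT]),
      ih (Finset.disjoint_of_subset_left (Finset.subset_insert x D) hD) hF₀,
      Finset.card_insert_of_notMem hx, extensionCount, extensionCount,
      Finset.prod_Ico_succ_top (Finset.card_le_card Finset.subset_union_right)]

theorem card_eq_extensionCount {𝒳 : Finset α} {F : Finset (LTree α)}
    (hF : ∀ T, T ∈ F ↔ IsTreeOn T 𝒳) (h𝒳 : 𝒳.Nonempty) :
    F.card = extensionCount 1 𝒳.card := by
  obtain ⟨x, hx⟩ := h𝒳
  have hsub : {x} ⊆ 𝒳 := Finset.singleton_subset_iff.2 hx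
  have hleaf : IsTreeOn (leaf x) {x} := ⟨trivial, rfl⟩
  rw [← Finset.card_singleton x, ← card_filter_restrict_eq hF hsub
    (Finset.singleton_nonempty x) hleaf, Finset.filter_true_of_mem]
  intro T hT
  obtain ⟨R, hres, hR⟩ := ((hF T).1 hT).exists_restrict hsub (Finset.singleton_nonempty x)
  rw [hres, eq_leaf_of_labels_eq_singleton hR.1 hR.2]

def AgreeOn (T₁ T₂ : LTree α) (S : Finset α) : Prop :=
  OptIso (restrict T₁ S) (restrict T₂ S)

open Classical in
theorem card_filter_agreeOn_mul_le {𝒳 S : Finset α} {F : Finset (LTree α)} {T₁ : LTree α}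
    (hF : ∀ T, T ∈ F ↔ IsTreeOn T 𝒳) (hS : S ⊆ 𝒳) (hSne : S.Nonempty) (hT₁ : IsTreeOn T₁ 𝒳) :
    (F.filter (AgreeOn T₁ · S)).card * extensionCount 1 S.card ≤ 2 ^ (S.card - 1) * F.card := by
  obtain ⟨R₁, hres, hR₁⟩ := hT₁.exists_restrict hS hSne
  have hsub : F.filter (AgreeOn T₁ · S) ⊆
      (isoList R₁).toFinset.biUnion fun R₂ => F.filter (restrict · S = some R₂) := by
    intro T₂ hT₂
    obtain ⟨hT₂F, hagree⟩ := Finset.mem_filter.1 hT₂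
    rw [AgreeOn, hres] at hagree
    obtain ⟨R₂, hR₂⟩ : ∃ R₂, restrict T₂ S = some R₂ := by
      cases h : restrict T₂ S with
      | none => rw [h] at hagree; exact hagree.elim
      | some R₂ => exact ⟨R₂, rfl⟩
    rw [hR₂] at hagree
    exact Finset.mem_biUnion.2 ⟨R₂, List.mem_toFinset.2 (mem_isoList_of_iso hagree),
      Finset.mem_filter.2 ⟨hT₂F, hR₂⟩⟩
  have hfibre : ∀ R₂ ∈ (isoList R₁).toFinset,
      (F.filter (restrict · S = some R₂)).card ≤ extensionCount S.card 𝒳.card := by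
    intro R₂ hR₂
    have hiso := iso_of_mem_isoList (List.mem_toFinset.1 hR₂)
    exact (card_filter_restrict_eq hF hS hSne ⟨hiso.good hR₁.1, hiso.labels_eq ▸ hR₁.2⟩).le
  have hlength : (isoList R₁).length = 2 ^ (S.card - 1) := by
    have h := two_mul_length_isoList R₁
    rw [← card_labels hR₁.1, hR₁.2] at h
    obtain ⟨k, hk⟩ := Nat.exists_eq_succ_of_ne_zero hSne.card_pos.ne'
    rw [hk, pow_succ] at h
    rw [hk, Nat.succ_sub_one]
    omega
  calc (F.filter (AgreeOn T₁ · S)).card * extensionCount 1 S.card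
      ≤ (isoList R₁).toFinset.card * extensionCount S.card 𝒳.card * extensionCount 1 S.card := by
        gcongr
        exact (Finset.card_le_card hsub).trans (Finset.card_biUnion_le_card_mul _ _ _ hfibre)
    _ ≤ 2 ^ (S.card - 1) * F.card := by
        rw [card_eq_extensionCount hF (hSne.mono hS), ← extensionCount_mul hSne.card_pos
          (Finset.card_le_card hS), ← hlength, mul_comm (extensionCount 1 _), ← mul_assoc]
        gcongr
        exact List.toFinset_card_le _

open Classical in
theorem sum_card_agreeOn_mul_le {𝒳 : Finset α} {F : Finset (LTree α)} {k : ℕ}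
    (hF : ∀ T, T ∈ F ↔ IsTreeOn T 𝒳) (hk : 1 ≤ k) :
    (∑ T₁ ∈ F, ∑ T₂ ∈ F, ((𝒳.powersetCard k).filter (AgreeOn T₁ T₂)).card) *
      extensionCount 1 k ≤ 𝒳.card.choose k * 2 ^ (k - 1) * F.card ^ 2 := by
  have hswap : ∑ T₁ ∈ F, ∑ T₂ ∈ F, ((𝒳.powersetCard k).filter (AgreeOn T₁ T₂)).card =
      ∑ S ∈ 𝒳.powersetCard k, ∑ T₁ ∈ F, (F.filter (AgreeOn T₁ · S)).card := by
    simp only [Finset.card_filter]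
    exact (Finset.sum_congr rfl fun _ _ => Finset.sum_comm).trans Finset.sum_comm
  rw [hswap]
  calc (∑ S ∈ 𝒳.powersetCard k, ∑ T₁ ∈ F, (F.filter (AgreeOn T₁ · S)).card) *
        extensionCount 1 k
      = ∑ S ∈ 𝒳.powersetCard k, ∑ T₁ ∈ F,
          (F.filter (AgreeOn T₁ · S)).card * extensionCount 1 k := by
        simp only [Finset.sum_mul]
    _ ≤ ∑ S ∈ 𝒳.powersetCard k, ∑ T₁ ∈ F, 2 ^ (k - 1) * F.card := by
        refine Finset.sum_le_sum fun S hS => Finset.sum_le_sum fun T₁ hT₁ => ?_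
        obtain ⟨hS𝒳, rfl⟩ := Finset.mem_powersetCard.1 hS
        exact card_filter_agreeOn_mul_le hF hS𝒳 (Finset.card_pos.1 hk) ((hF T₁).1 hT₁)
    _ = 𝒳.card.choose k * 2 ^ (k - 1) * F.card ^ 2 := by
        simp only [Finset.sum_const, Finset.card_powersetCard, smul_eq_mul]
        ring

theorem exists_agreeOn_of_dLR_add_le {𝒳 : Finset α} {T₁ T₂ : LTree α} {k : ℕ}
    (h₁ : IsTreeOn T₁ 𝒳) (h₂ : IsTreeOn T₂ 𝒳) (hk : dLR T₁ T₂ + k ≤ 𝒳.card) :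
    ∃ S ⊆ 𝒳, S.card = k ∧ AgreeOn T₁ T₂ S := by
  have hlab : labels T₁ ∪ labels T₂ = 𝒳 := by rw [h₁.2, h₂.2, Finset.union_self]
  have hremove {T : LTree α} (hT : IsTreeOn T 𝒳) (X : Finset α) :
      remove T X = restrict T (𝒳 \ X) := by rw [remove, hT.2]
  have hne : {m | ∃ X : Finset α, X ⊆ labels T₁ ∪ labels T₂ ∧ X.card = m ∧
      OptIso (remove T₁ X) (remove T₂ X)}.Nonempty := by
    refine ⟨𝒳.card, 𝒳, hlab.ge, rfl, ?_⟩
    rw [hremove h₁, hremove h₂, Finset.sdiff_self, (restrict_eq_none_iff).2 (by simp),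
      (restrict_eq_none_iff).2 (by simp)]
    trivial
  obtain ⟨X, hX𝒳, hXcard, hX⟩ := Nat.sInf_mem hne
  rw [hlab] at hX𝒳
  have hkX : k ≤ (𝒳 \ X).card := by
    rw [Finset.card_sdiff_of_subset hX𝒳]
    exact Nat.le_sub_of_add_le' (hXcard ▸ hk)
  obtain ⟨S, hSX, hSk⟩ := Finset.exists_subset_card_eq hkX
  refine ⟨S, hSX.trans Finset.sdiff_subset, hSk, ?_⟩
  have := hX.restrictO S
  rwa [hremove h₁, hremove h₂, restrictO_restrict, restrictO_restrict,
    Finset.inter_eq_right.2 hSX] at this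

open Classical in
/-- Either `T₁` and `T₂` agree on some `k`-subset, and the left side is at most `0`, or
`d_LR(T₁, T₂) ≥ n - (k - 1)`. -/
theorem sub_le_dLR {𝒳 : Finset α} {T₁ T₂ : LTree α} {k : ℕ} (h₁ : IsTreeOn T₁ 𝒳)
    (h₂ : IsTreeOn T₂ 𝒳) (hk : 1 ≤ k) :
    (𝒳.card : ℝ) - (k - 1) - 𝒳.card * ((𝒳.powersetCard k).filter (AgreeOn T₁ T₂)).card ≤
      dLR T₁ T₂ := by
  have hk' : (1 : ℝ) ≤ k := by exact_mod_cast hk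
  by_cases hd : dLR T₁ T₂ + k ≤ 𝒳.card
  · obtain ⟨S, hS𝒳, hSk, hS⟩ := exists_agreeOn_of_dLR_add_le h₁ h₂ hd
    have hpos : (1 : ℝ) ≤ ((𝒳.powersetCard k).filter (AgreeOn T₁ T₂)).card := by
      exact_mod_cast Finset.card_pos.2
        ⟨S, Finset.mem_filter.2 ⟨Finset.mem_powersetCard.2 ⟨hS𝒳, hSk⟩, hS⟩⟩
    nlinarith [(dLR T₁ T₂).cast_nonneg (α := ℝ), (𝒳.card).cast_nonneg (α := ℝ)]
  · have : (𝒳.card : ℝ) + 1 ≤ dLR T₁ T₂ + k := by exact_mod_cast (not_le.1 hd)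
    nlinarith [(𝒳.card).cast_nonneg (α := ℝ),
      (((𝒳.powersetCard k).filter (AgreeOn T₁ T₂)).card).cast_nonneg (α := ℝ)]

theorem sub_le_average_dLR {𝒳 : Finset α} {F : Finset (LTree α)} {k : ℕ}
    (hF : ∀ T, T ∈ F ↔ IsTreeOn T 𝒳) (hk : 1 ≤ k) (hkn : k ≤ 𝒳.card) :
    (𝒳.card : ℝ) - (k - 1) - 𝒳.card * 𝒳.card.choose k * 2 ^ (k - 1) / extensionCount 1 k ≤
      (∑ T₁ ∈ F, ∑ T₂ ∈ F, (dLR T₁ T₂ : ℝ)) / (F.card : ℝ) ^ 2 := by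
  classical
  set n := 𝒳.card
  set A := ∑ T₁ ∈ F, ∑ T₂ ∈ F, ((𝒳.powersetCard k).filter (AgreeOn T₁ T₂)).card
  have hF₀ : (0 : ℝ) < F.card := by
    rw [card_eq_extensionCount hF (Finset.card_pos.1 (hk.trans hkn))]
    exact_mod_cast extensionCount_pos le_rfl n
  have he : (0 : ℝ) < extensionCount 1 k := by exact_mod_cast extensionCount_pos le_rfl k
  have hA : (A : ℝ) ≤ n.choose k * 2 ^ (k - 1) / extensionCount 1 k * (F.card : ℝ) ^ 2 := by
    rw [div_mul_eq_mul_div, le_div_iff₀ he]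
    have := sum_card_agreeOn_mul_le hF hk
    have : (A : ℝ) * extensionCount 1 k ≤ n.choose k * 2 ^ (k - 1) * F.card ^ 2 := by
      exact_mod_cast this
    linarith
  have hsum : (F.card : ℝ) ^ 2 * (n - (k - 1)) - n * A ≤ ∑ T₁ ∈ F, ∑ T₂ ∈ F, (dLR T₁ T₂ : ℝ) :=
    calc (F.card : ℝ) ^ 2 * (n - (k - 1)) - n * A
        = ∑ T₁ ∈ F, ∑ T₂ ∈ F,
            ((n : ℝ) - (k - 1) - n * ((𝒳.powersetCard k).filter (AgreeOn T₁ T₂)).card) := by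
          simp only [A, Finset.sum_sub_distrib, Finset.sum_const, ← Finset.mul_sum, nsmul_eq_mul]
          push_cast
          ring
      _ ≤ _ := Finset.sum_le_sum fun T₁ h₁ => Finset.sum_le_sum fun T₂ h₂ =>
          sub_le_dLR ((hF T₁).1 h₁) ((hF T₂).1 h₂) hk
  rw [le_div_iff₀ (by positivity)]
  have hnA := mul_le_mul_of_nonneg_left hA n.cast_nonneg (α := ℝ)
  calc ((n : ℝ) - (k - 1) - n * n.choose k * 2 ^ (k - 1) / extensionCount 1 k) * F.card ^ 2
      = (F.card : ℝ) ^ 2 * (n - (k - 1)) -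
          n * (n.choose k * 2 ^ (k - 1) / extensionCount 1 k * F.card ^ 2) := by ring
    _ ≤ _ := by linarith

open Real in
theorem mul_choose_mul_two_pow_div_le {n j : ℕ} {ρ : ℝ} (hρ : 0 ≤ ρ)
    (hn : 2 * (n : ℝ) ≤ ρ * (2 * j / exp 1) ^ 2) :
    (n : ℝ) * n.choose (j + 1) * 2 ^ j / extensionCount 1 (j + 1) ≤ n ^ 2 * ρ ^ j := by
  have hfac : (extensionCount 1 (j + 1) : ℝ) * j.factorial = (2 * j).factorial := by
    exact_mod_cast extensionCount_one_mul_factorial j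
  have hchoose : (n.choose (j + 1) : ℝ) * j.factorial ≤ n ^ (j + 1) := by
    have h := Nat.choose_le_pow_div (α := ℝ) (j + 1) n
    rw [le_div_iff₀ (by positivity)] at h
    calc (n.choose (j + 1) : ℝ) * j.factorial ≤ n.choose (j + 1) * (j + 1).factorial := by
          gcongr; omega
      _ ≤ _ := h
  have hfactorial : (2 * j / exp 1 : ℝ) ^ (2 * j) ≤ (2 * j).factorial := by
    have h := pow_div_factorial_le_exp (x := ((2 * j : ℕ) : ℝ)) (by positivity) (2 * j)
    rw [← mul_one ((2 * j : ℕ) : ℝ), exp_nat_mul, mul_one, div_le_iff₀ (by positivity)] at h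
    rw [div_pow, div_le_iff₀ (by positivity)]
    push_cast at h ⊢
    linarith
  have hpow : (2 * n : ℝ) ^ j ≤ ρ ^ j * (2 * j).factorial :=
    calc (2 * n : ℝ) ^ j ≤ (ρ * (2 * j / exp 1) ^ 2) ^ j := by gcongr
      _ = ρ ^ j * (2 * j / exp 1) ^ (2 * j) := by rw [mul_pow, ← pow_mul, mul_comm 2 j]
      _ ≤ ρ ^ j * (2 * j).factorial := by gcongr
  have hext : (0 : ℝ) < extensionCount 1 (j + 1) := by
    exact_mod_cast extensionCount_pos le_rfl _
  rw [div_le_iff₀ hext]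
  refine le_of_mul_le_mul_right ?_ (by positivity : (0 : ℝ) < j.factorial)
  calc (n : ℝ) * n.choose (j + 1) * 2 ^ j * j.factorial
      = n * 2 ^ j * (n.choose (j + 1) * j.factorial) := by ring
    _ ≤ n * 2 ^ j * n ^ (j + 1) := by gcongr
    _ = n ^ 2 * (2 * n) ^ j := by ring
    _ ≤ n ^ 2 * (ρ ^ j * (2 * j).factorial) := by gcongr
    _ = n ^ 2 * ρ ^ j * extensionCount 1 (j + 1) * j.factorial := by rw [← hfac]; ring

open Filter Real in
theorem eventually_exists_agreement_threshold {c : ℝ} (hc : exp 1 / √2 < c) :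
    ∀ᶠ n : ℕ in atTop, ∃ k, 1 ≤ k ∧ k ≤ n ∧
      ((k : ℝ) - 1) + n * n.choose k * 2 ^ (k - 1) / extensionCount 1 k ≤ c * √n := by
  obtain ⟨c', hc', hc'c⟩ := exists_between hc
  have hc'₀ : 0 < c' := lt_trans (by positivity) hc'
  set ρ := exp 1 ^ 2 / (2 * c' ^ 2) with hρ
  have hρ₀ : 0 < ρ := by positivity
  have hρ₁ : ρ < 1 := by
    rw [div_lt_iff₀ (by positivity)] at hc'
    have := pow_lt_pow_left₀ hc' (exp_pos 1).le two_ne_zero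
    rw [mul_pow, sq_sqrt zero_le_two] at this
    rw [div_lt_one (by positivity)]
    linarith
  have hsqrt := tendsto_sqrt_atTop.comp tendsto_natCast_atTop_atTop
  filter_upwards [eventually_sq_mul_pow_le_one hρ₀ hρ₁ hc'₀,
    hsqrt.eventually_ge_atTop (c' + 2), hsqrt.eventually_ge_atTop (2 / (c - c'))]
    with n hdecay hn₁ hn₂
  simp only [Function.comp] at hn₁ hn₂
  have hs : √n ^ 2 = n := sq_sqrt n.cast_nonneg
  set j := ⌈c' * √n⌉₊
  have hj₁ : c' * √n ≤ j := Nat.le_ceil _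
  have hj₂ : (j : ℝ) < c' * √n + 1 := Nat.ceil_lt_add_one (by positivity)
  have hjn : j + 1 ≤ n := by
    have : (j : ℝ) + 1 ≤ n := by nlinarith
    exact_mod_cast this
  refine ⟨j + 1, by omega, hjn, ?_⟩
  have hρj : ρ * (2 * j / exp 1) ^ 2 = 2 * (j / c') ^ 2 := by
    rw [hρ]
    field_simp
  have hbound : 2 * (n : ℝ) ≤ ρ * (2 * j / exp 1) ^ 2 := by
    rw [hρj, ← hs]
    gcongr
    rwa [le_div_iff₀ hc'₀, mul_comm]
  have hmain := (mul_choose_mul_two_pow_div_le hρ₀.le hbound).trans (hdecay j hj₁)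
  have hgap : 2 ≤ (c - c') * √n := by rwa [div_le_iff₀ (sub_pos.2 hc'c), mul_comm] at hn₂
  rw [Nat.add_sub_cancel]
  push_cast
  linarith

end LTree

open LTree

/-- Theorem 3 of the paper, from Bryant–McKenzie–Steel.  For any
constant `c > e/√2` there is `n₀` such that for all `n ≥ n₀`, if `T₁` and `T₂` are
chosen uniformly and independently from the trees on a label set of size `n`, then
`E[d_LR(T₁,T₂)] ≥ n − c√n`.  The expectation is written as the average of
`d_LR(T₁,T₂)` over all ordered pairs of trees on `𝒳`. -/
theorem expected_dLR_lower_bound {α : Type u} [DecidableEq α] :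
    ∀ c : ℝ, Real.exp 1 / Real.sqrt 2 < c →
    ∃ n₀ : ℕ, ∀ n : ℕ, n₀ ≤ n →
      ∀ 𝒳 : Finset α, 𝒳.card = n →
      ∀ F : Finset (LTree α), (∀ T, T ∈ F ↔ IsTreeOn T 𝒳) →
      (n : ℝ) - c * Real.sqrt n ≤
        (∑ T₁ ∈ F, ∑ T₂ ∈ F, (dLR T₁ T₂ : ℝ)) / (F.card : ℝ) ^ 2 := by
  intro c hc
  obtain ⟨n₀, hn₀⟩ := Filter.eventually_atTop.1 (eventually_exists_agreement_threshold hc)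
  refine ⟨n₀, fun n hn 𝒳 h𝒳 F hF => ?_⟩
  obtain ⟨k, hk, hkn, hthreshold⟩ := hn₀ n hn
  subst h𝒳
  linarith [sub_le_average_dLR hF hk hkn]
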